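/- Let A ∈ ℂ^{m×m}, B ∈ ℂ^{n×m}, C ∈ ℂ^{m×n}, D ∈ ℂ^{n×n}, where A and D are group invertible, and let λ ∈ ℂ with λ ≠ −1. If A^π·C = 0, D^π·B = 0, D^#·B·A = λ·B and D^#·B·C = λ·D, then the block matrix M = [[A, C], [B, D]] ∈ ℂ^{(m+n)×(m+n)} is group invertible. -/
import Mathlib

/-- `Y` is the group inverse of the matrix (or ring element) `X`. -/
def IsGroupInverse {A : Type*} [Ring A] (X Y : A) : Prop :=
  X * Y * X = X ∧ Y * X * Y = Y ∧ X * Y = Y * X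

open Matrix


private theorem conj_gi {R : Type*} [Ring R] {s t x y : R}
    (hts : t * s = 1) (h : IsGroupInverse x y) :
    IsGroupInverse (s * x * t) (s * y * t) := by
  obtain ⟨e1, e2, e3⟩ := h
  have key : ∀ u v : R, s * u * t * (s * v * t) = s * (u * v) * t := by
    intro u v
    calc s * u * t * (s * v * t) = s * (u * ((t * s) * v)) * t := by noncomm_ring
    _ = s * (u * v) * t := by rw [hts, one_mul]
  refine ⟨?_, ?_, ?_⟩
  · rw [key, key, e1]
  · rw [key, key, e2]
  · rw [key, key, e3]


private theorem tri_gi {m n : ℕ} (P Pd : Matrix (Fin m) (Fin m) ℂ) (C : Matrix (Fin m) (Fin n) ℂ)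
    (Q Qd : Matrix (Fin n) (Fin n) ℂ)
    (hP : IsGroupInverse P Pd) (hQ : IsGroupInverse Q Qd)
    (hC : (1 - P * Pd) * C * (1 - Q * Qd) = 0) :
    IsGroupInverse (fromBlocks P C 0 Q)
      (fromBlocks Pd (Pd * Pd * C * (1 - Q * Qd) + (1 - P * Pd) * C * (Qd * Qd) - Pd * C * Qd) 0 Qd) := by
  obtain ⟨hP1, hP2, hP3⟩ := hP
  obtain ⟨hQ1, hQ2, hQ3⟩ := hQ
  have cp1 : ∀ {j : ℕ} (x : Matrix (Fin m) (Fin j) ℂ), P * (Pd * (P * x)) = P * x := by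
    intro j x; rw [← Matrix.mul_assoc, ← Matrix.mul_assoc, hP1]
  have cp2 : ∀ {j : ℕ} (x : Matrix (Fin m) (Fin j) ℂ), Pd * (P * (Pd * x)) = Pd * x := by
    intro j x; rw [← Matrix.mul_assoc, ← Matrix.mul_assoc, hP2]
  have hPPdPd : P * Pd * Pd = Pd := by rw [hP3, hP2]
  have hPPPd : P * P * Pd = P := by rw [Matrix.mul_assoc, hP3, ← Matrix.mul_assoc, hP1]
  have hPdPdP : Pd * Pd * P = Pd := by rw [Matrix.mul_assoc, ← hP3, ← Matrix.mul_assoc, hP2]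
  have cp3 : ∀ {j : ℕ} (x : Matrix (Fin m) (Fin j) ℂ), P * (Pd * (Pd * x)) = Pd * x := by
    intro j x; rw [← Matrix.mul_assoc, ← Matrix.mul_assoc, hPPdPd]
  have cp4 : ∀ {j : ℕ} (x : Matrix (Fin m) (Fin j) ℂ), P * (P * (Pd * x)) = P * x := by
    intro j x; rw [← Matrix.mul_assoc, ← Matrix.mul_assoc, hPPPd]
  have cp5 : ∀ {j : ℕ} (x : Matrix (Fin m) (Fin j) ℂ), Pd * (Pd * (P * x)) = Pd * x := by
    intro j x; rw [← Matrix.mul_assoc, ← Matrix.mul_assoc, hPdPdP]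
  have ep1 : P * (Pd * P) = P := by rw [← Matrix.mul_assoc, hP1]
  have ep2 : Pd * (P * Pd) = Pd := by rw [← Matrix.mul_assoc, hP2]
  have hq1 : Q * (Qd * Q) = Q := by rw [← Matrix.mul_assoc, hQ1]
  have hq2 : Qd * (Q * Qd) = Qd := by rw [← Matrix.mul_assoc, hQ2]
  have hQdQdQ : Qd * Qd * Q = Qd := by rw [Matrix.mul_assoc, ← hQ3, ← Matrix.mul_assoc, hQ2]
  have hq3 : Qd * (Qd * Q) = Qd := by rw [← Matrix.mul_assoc, hQdQdQ]
  have hQQQd : Q * Q * Qd = Q := by rw [Matrix.mul_assoc, hQ3, ← Matrix.mul_assoc, hQ1]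
  have hq4 : Q * (Q * Qd) = Q := by rw [← Matrix.mul_assoc, hQQQd]
  have hQ3r : Qd * Q = Q * Qd := hQ3.symm
  have hC' : P * (Pd * (C * (Q * Qd))) = P * (Pd * C) + C * (Q * Qd) - C := by
    have h := hC
    simp only [Matrix.sub_mul, Matrix.mul_sub, Matrix.one_mul, Matrix.mul_one,
      Matrix.mul_assoc] at h
    rw [← sub_eq_zero, ← h]; abel
  have ep2' : Pd * (Pd * P) = Pd := by rw [← Matrix.mul_assoc, hPdPdP]
  refine ⟨?_, ?_, ?_⟩ <;>
    (rw [Matrix.fromBlocks_multiply, Matrix.fromBlocks_multiply]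
     apply Matrix.fromBlocks_inj.mpr
     refine ⟨?_, ?_, ?_, ?_⟩)
  all_goals simp only [Matrix.add_mul, Matrix.mul_add, Matrix.sub_mul, Matrix.mul_sub,
        Matrix.one_mul, Matrix.mul_one, Matrix.zero_mul, Matrix.mul_zero,
        add_zero, zero_add, Matrix.mul_assoc]
  all_goals simp only [hQ3r, cp1, cp2, cp3, cp4, cp5, ep1, ep2, ep2', hq1, hq2, hq3, hq4, hP3, hC']
  all_goals abel


private theorem smul_cancel {r c : ℕ} {t : ℂ} (ht : t ≠ 0) {X Y : Matrix (Fin r) (Fin c) ℂ}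
    (h : t • X = t • Y) : X = Y := by
  have h2 := congrArg (fun Z => t⁻¹ • Z) h
  simpa [smul_smul, inv_mul_cancel₀ ht] using h2

private theorem P_part {m n : ℕ} (A Ad : Matrix (Fin m) (Fin m) ℂ) (B : Matrix (Fin n) (Fin m) ℂ)
    (C : Matrix (Fin m) (Fin n) ℂ) (D Dd : Matrix (Fin n) (Fin n) ℂ) (l : ℂ)
    (hA1 : A * Ad * A = A) (hA2 : Ad * A * Ad = Ad) (hA3 : A * Ad = Ad * A)
    (hD1 : D * Dd * D = D) (hD2 : Dd * D * Dd = Dd) (hD3 : D * Dd = Dd * D)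
    (h1' : A * Ad * C = C) (h2' : D * Dd * B = B)
    (h3 : Dd * B * A = l • B) (h4 : Dd * B * C = l • D) :
    IsGroupInverse (A - C * (Dd * B)) (Ad * (Ad * (A - C * (Dd * B)))) ∧
      (1 - (A - C * (Dd * B)) * (Ad * (Ad * (A - C * (Dd * B))))) * C * (1 - D * Dd) = 0 := by
  -- square collapse facts
  have t3 : Ad * Ad * A = Ad := by rw [Matrix.mul_assoc, ← hA3, ← Matrix.mul_assoc, hA2]
  have a1e : A * (Ad * A) = A := by rw [← Matrix.mul_assoc, hA1]
  have a4e : A * Ad * Ad = Ad := by rw [hA3, hA2]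
  have a5e : A * A * Ad = A := by rw [Matrix.mul_assoc, hA3, ← Matrix.mul_assoc, hA1]
  have a6e : Ad * A * A = A := by rw [← hA3, hA1]
  have a4c : ∀ {j : ℕ} (x : Matrix (Fin m) (Fin j) ℂ), A * (Ad * (Ad * x)) = Ad * x := by
    intro j x; rw [← Matrix.mul_assoc, ← Matrix.mul_assoc, a4e]
  have cA2e : Ad * (A * C) = C := by rw [← Matrix.mul_assoc, ← hA3, h1']
  have b1e : D * (Dd * B) = B := by rw [← Matrix.mul_assoc, h2']
  have h3e : Dd * (B * A) = l • B := by rw [← Matrix.mul_assoc, h3]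
  have h3c : ∀ {j : ℕ} (x : Matrix (Fin m) (Fin j) ℂ),
      Dd * (B * (A * x)) = l • (B * x) := by
    intro j x; rw [← Matrix.mul_assoc, ← Matrix.mul_assoc, h3, Matrix.smul_mul]
  have h4c : ∀ {j : ℕ} (x : Matrix (Fin n) (Fin j) ℂ),
      Dd * (B * (C * x)) = l • (D * x) := by
    intro j x; rw [← Matrix.mul_assoc, ← Matrix.mul_assoc, h4, Matrix.smul_mul]
  -- the key identity  f * (Ad * (Ad * f)) = f * Ad  for f = C * (Dd * B)
  have K6 : C * (Dd * B) * (Ad * (Ad * (C * (Dd * B)))) = C * (Dd * B) * Ad := by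
    have lhs_eq : C * (Dd * B) * (Ad * (Ad * (C * (Dd * B))))
        = C * (Dd * (B * (Ad * (Ad * (C * (Dd * B)))))) := by
      rw [Matrix.mul_assoc, Matrix.mul_assoc]
    have rhs_eq : C * (Dd * B) * Ad = C * (Dd * (B * Ad)) := by
      rw [Matrix.mul_assoc, Matrix.mul_assoc]
    rw [lhs_eq, rhs_eq]
    by_cases hl0 : l = 0
    · subst hl0
      have dbad : ∀ {j : ℕ} (x : Matrix (Fin m) (Fin j) ℂ), Dd * (B * (Ad * x)) = 0 := by
        intro j x
        have : Dd * (B * (A * (Ad * (Ad * x)))) = 0 := by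
          rw [h3c]; simp
        rwa [a4c] at this
      have dbade : Dd * (B * Ad) = 0 := by
        have : Dd * (B * (A * (Ad * Ad))) = 0 := by rw [h3c]; simp
        rwa [show A * (Ad * Ad) = Ad by rw [← Matrix.mul_assoc, a4e]] at this
      rw [dbad, dbade, Matrix.mul_zero]
    · -- l ≠ 0
      have BAAd : B * (A * Ad) = B := by
        apply smul_cancel hl0
        have e1 : Dd * (B * (A * (A * Ad))) = l • (B * (A * Ad)) := h3c (A * Ad)
        have e2 : Dd * (B * (A * (A * Ad))) = l • B := by
          rw [show A * (A * Ad) = A from by rw [← Matrix.mul_assoc, a5e], h3e]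
        rw [← e1, e2]
      have c0 : Dd * B = l • (B * Ad) := by
        conv_lhs => rw [← BAAd]
        rw [h3c]
      have c0c : ∀ {j : ℕ} (x : Matrix (Fin m) (Fin j) ℂ),
          Dd * (B * x) = l • (B * (Ad * x)) := by
        intro j x; rw [← Matrix.mul_assoc, c0, Matrix.smul_mul, Matrix.mul_assoc]
      have r1c : ∀ {j : ℕ} (x : Matrix (Fin m) (Fin j) ℂ),
          l • (Dd * (B * (Ad * x))) = Dd * (Dd * (B * x)) := by
        intro j x
        conv_rhs => rw [c0c x, Matrix.mul_smul]
      have r1e : l • (Dd * (B * Ad)) = Dd * (Dd * B) := by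
        conv_rhs => rw [c0, Matrix.mul_smul]
      have hll : l * l ≠ 0 := mul_ne_zero hl0 hl0
      apply smul_cancel hll
      have hL : (l * l) • (C * (Dd * (B * (Ad * (Ad * (C * (Dd * B)))))))
          = l • (C * (Dd * (Dd * B))) := by
        rw [mul_smul, ← Matrix.mul_smul, r1c, ← Matrix.mul_smul, ← Matrix.mul_smul,
          r1c, h4c, b1e, Matrix.mul_smul, Matrix.mul_smul, Matrix.mul_smul]
      have hR : (l * l) • (C * (Dd * (B * Ad))) = l • (C * (Dd * (Dd * B))) := by
        rw [mul_smul, ← Matrix.mul_smul, r1e]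
      rw [hL, hR]
  -- staged facts about P
  have N1 : C * (Dd * B) * (A - C * (Dd * B)) = 0 := by
    rw [Matrix.mul_sub]
    have e1 : C * (Dd * B) * A = l • (C * B) := by
      rw [Matrix.mul_assoc, Matrix.mul_assoc, h3e, Matrix.mul_smul]
    have e2 : C * (Dd * B) * (C * (Dd * B)) = l • (C * B) := by
      rw [Matrix.mul_assoc, Matrix.mul_assoc, h4c, b1e, Matrix.mul_smul]
    rw [e1, e2, sub_self]
  have N2 : (A - C * (Dd * B)) * (A - C * (Dd * B)) = A * (A - C * (Dd * B)) := by
    rw [Matrix.sub_mul, N1, sub_zero]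
  have N3 : Ad * (Ad * (A - C * (Dd * B))) * (A - C * (Dd * B))
      = Ad * (A - C * (Dd * B)) := by
    rw [Matrix.mul_assoc, Matrix.mul_assoc, N2, ← Matrix.mul_assoc, ← Matrix.mul_assoc, t3]
  have N4 : C * (Dd * B) * (Ad * (Ad * (A - C * (Dd * B)))) = 0 := by
    have expand : Ad * (Ad * (A - C * (Dd * B)))
        = Ad * (Ad * A) - Ad * (Ad * (C * (Dd * B))) := by
      rw [Matrix.mul_sub, Matrix.mul_sub]
    rw [expand, Matrix.mul_sub]
    rw [show Ad * (Ad * A) = Ad from by rw [← Matrix.mul_assoc, t3]]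
    rw [show C * (Dd * B) * (Ad * (Ad * (C * (Dd * B)))) = C * (Dd * B) * Ad from K6]
    rw [sub_self]
  have N5 : (A - C * (Dd * B)) * (Ad * (Ad * (A - C * (Dd * B))))
      = Ad * (A - C * (Dd * B)) := by
    rw [Matrix.sub_mul, N4, sub_zero, a4c]
  have d5e : D * (D * Dd) = D := by
    rw [← Matrix.mul_assoc, Matrix.mul_assoc, hD3, ← Matrix.mul_assoc, hD1]
  refine ⟨⟨?_, ?_, ?_⟩, ?_⟩
  · -- P * Pd * P = P
    rw [N5, Matrix.mul_assoc, N2, ← Matrix.mul_assoc, Matrix.mul_sub, a6e, ← hA3,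
      ← Matrix.mul_assoc, h1']
  · -- Pd * P * Pd = Pd
    rw [N3, Matrix.mul_assoc, N5]
  · -- commute
    rw [N5, N3]
  · -- (1 - P*Pd) * C * (1 - D*Dd) = 0
    rw [N5]
    have c1 : (1 - Ad * (A - C * (Dd * B))) * C = l • (Ad * (C * D)) := by
      rw [Matrix.sub_mul, Matrix.one_mul, Matrix.mul_sub, Matrix.sub_mul,
        Matrix.mul_assoc Ad A C, cA2e, Matrix.mul_assoc, Matrix.mul_assoc,
        Matrix.mul_assoc, show Dd * (B * C) = l • D from by rw [← Matrix.mul_assoc, h4],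
        Matrix.mul_smul, Matrix.mul_smul, sub_sub_cancel]
    rw [c1, Matrix.smul_mul, Matrix.mul_sub, Matrix.mul_one, Matrix.mul_assoc,
      Matrix.mul_assoc, d5e, sub_self, smul_zero]

theorem block_matrix_group_invertible₂ {m n : ℕ}
    (A Ad : Matrix (Fin m) (Fin m) ℂ) (B : Matrix (Fin n) (Fin m) ℂ)
    (C : Matrix (Fin m) (Fin n) ℂ) (D Dd : Matrix (Fin n) (Fin n) ℂ)
    (hA : IsGroupInverse A Ad) (hD : IsGroupInverse D Dd)
    (l : ℂ) (hl : l ≠ -1)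
    (h1 : (1 - A * Ad) * C = 0) (h2 : (1 - D * Dd) * B = 0)
    (h3 : Dd * B * A = l • B) (h4 : Dd * B * C = l • D) :
    ∃ Y, IsGroupInverse (Matrix.fromBlocks A C B D) Y := by
  obtain ⟨hA1, hA2, hA3⟩ := hA
  obtain ⟨hD1, hD2, hD3⟩ := hD
  have h1' : A * Ad * C = C := by
    have h := h1; rwa [Matrix.sub_mul, Matrix.one_mul, sub_eq_zero, eq_comm] at h
  have h2' : D * Dd * B = B := by
    have h := h2; rwa [Matrix.sub_mul, Matrix.one_mul, sub_eq_zero, eq_comm] at h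
  obtain ⟨hPgi, hPcond⟩ := P_part A Ad B C D Dd l hA1 hA2 hA3 hD1 hD2 hD3 h1' h2' h3 h4
  have hone : (1 : ℂ) + l ≠ 0 := fun h => hl (by linear_combination h)
  have hQQd : ((1 + l) • D) * ((1 + l)⁻¹ • Dd) = D * Dd := by
    rw [Matrix.smul_mul, Matrix.mul_smul, smul_smul, mul_inv_cancel₀ hone, one_smul]
  have hQdQ : ((1 + l)⁻¹ • Dd) * ((1 + l) • D) = Dd * D := by
    rw [Matrix.smul_mul, Matrix.mul_smul, smul_smul, inv_mul_cancel₀ hone, one_smul]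
  have hQgi : IsGroupInverse ((1 + l) • D) ((1 + l)⁻¹ • Dd) := by
    refine ⟨?_, ?_, ?_⟩
    · rw [hQQd, Matrix.mul_smul, hD1]
    · rw [hQdQ, Matrix.mul_smul, hD2]
    · rw [hQQd, hQdQ, hD3]
  have hcond : (1 - (A - C * (Dd * B)) * (Ad * (Ad * (A - C * (Dd * B))))) * C *
      (1 - ((1 + l) • D) * ((1 + l)⁻¹ • Dd)) = 0 := by
    rw [hQQd]; exact hPcond
  have htri := tri_gi _ _ C _ _ hPgi hQgi hcond
  have hSi : (Matrix.fromBlocks 1 0 (Dd * B) 1 : Matrix (Fin m ⊕ Fin n) (Fin m ⊕ Fin n) ℂ) *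
      (Matrix.fromBlocks 1 0 (-(Dd * B)) 1) = 1 := by
    rw [Matrix.fromBlocks_multiply]
    simp only [Matrix.one_mul, Matrix.mul_one, Matrix.zero_mul, Matrix.mul_zero,
      add_zero, zero_add, add_neg_cancel]
    exact Matrix.fromBlocks_one
  have b1e : D * (Dd * B) = B := by rw [← Matrix.mul_assoc, h2']
  have e3 : Dd * B * (C * (Dd * B)) = l • B := by
    rw [← Matrix.mul_assoc, h4, Matrix.smul_mul, ← Matrix.mul_assoc, h2']
  have hDdBP : Dd * B * (A - C * (Dd * B)) = 0 := by
    rw [Matrix.mul_sub, h3, e3, sub_self]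
  have hM : Matrix.fromBlocks A C B D =
      (Matrix.fromBlocks 1 0 (-(Dd * B)) 1) *
        (Matrix.fromBlocks (A - C * (Dd * B)) C 0 ((1 + l) • D)) *
        (Matrix.fromBlocks 1 0 (Dd * B) 1) := by
    rw [Matrix.fromBlocks_multiply, Matrix.fromBlocks_multiply]
    symm
    apply Matrix.fromBlocks_inj.mpr
    refine ⟨?_, ?_, ?_, ?_⟩
    · simp only [Matrix.one_mul, Matrix.mul_one, Matrix.zero_mul, Matrix.mul_zero,
        add_zero, zero_add]
      exact sub_add_cancel A (C * (Dd * B))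
    · simp only [Matrix.one_mul, Matrix.mul_one, Matrix.zero_mul, Matrix.mul_zero,
        add_zero, zero_add]
    · simp only [Matrix.one_mul, Matrix.mul_one, Matrix.zero_mul, Matrix.mul_zero,
        add_zero, zero_add, Matrix.neg_mul, Matrix.add_mul]
      rw [hDdBP, ← Matrix.mul_assoc, h4]
      simp only [neg_zero, Matrix.smul_mul, Matrix.mul_assoc, b1e]
      module
    · simp only [Matrix.one_mul, Matrix.mul_one, Matrix.zero_mul, Matrix.mul_zero,
        add_zero, zero_add, Matrix.neg_mul]
      rw [h4]
      module
  have hfin := conj_gi hSi htri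
  rw [← hM] at hfin
  exact ⟨_, hfin⟩
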